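/- arXiv:2509.22482 — 2 statements merged into one kernel-verified Lean document; each statement's English description precedes it below -/
import Mathlib

section
/- Let K_ZZ ∈ ℝ^{M×M} be symmetric positive definite, K_ZX ∈ ℝ^{M×N}, and σ² > 0. Define the Nyström matrix R = K_ZXᵀ K_ZZ⁻¹ K_ZX and C̃ = K_ZX K_ZXᵀ + σ² K_ZZ. Then K_ZXᵀ C̃⁻¹ K_ZX = R (R + σ² I_N)⁻¹, equivalently the sparse GP weight formula k_Z(x)ᵀ C̃⁻¹ K_ZX Yᵀ agrees with Nyström-approximate GP regression. -/
open Matrix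

/-! The push-through identity `(A B + s K) K⁻¹ A = A (B K⁻¹ A + s I)` turns, after cancelling
the two invertible factors, into `(A B + s K)⁻¹ A = K⁻¹ A (B K⁻¹ A + s I)⁻¹`; multiplying by
`B` on the left gives the claim. Invertibility of both factors comes from positive definiteness:
`A Aᵀ + s K` and `Aᵀ K⁻¹ A + s I` are each a positive multiple of a positive definite matrix
plus a positive semidefinite one. -/

namespace Matrix

variable {m n R : Type*} [Fintype m] [Fintype n]

section CommRing

variable [DecidableEq m] [DecidableEq n] [CommRing R]

theorem inv_mul_eq_mul_inv_of_mul_eq {C : Matrix m m R} {S : Matrix n n R} {P A : Matrix m n R}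
    (hC : IsUnit C) (hS : IsUnit S) (h : C * P = A * S) : C⁻¹ * A = P * S⁻¹ := by
  rw [isUnit_iff_isUnit_det] at hC hS
  calc C⁻¹ * A = C⁻¹ * (A * S) * S⁻¹ := by
        rw [Matrix.mul_assoc, Matrix.mul_assoc, mul_nonsing_inv _ hS, Matrix.mul_one]
    _ = P * S⁻¹ := by rw [← h, ← Matrix.mul_assoc, nonsing_inv_mul _ hC, Matrix.one_mul]

theorem mul_add_smul_mul_inv_mul {K : Matrix m m R} (hK : IsUnit K) (A : Matrix m n R)
    (B : Matrix n m R) (s : R) :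
    (A * B + s • K) * (K⁻¹ * A) = A * (B * K⁻¹ * A + s • 1) := by
  rw [isUnit_iff_isUnit_det] at hK
  rw [Matrix.add_mul, Matrix.smul_mul, ← Matrix.mul_assoc K, mul_nonsing_inv _ hK,
    Matrix.mul_add, Matrix.mul_smul, Matrix.mul_one, Matrix.one_mul]
  simp only [Matrix.mul_assoc]

theorem mul_inv_add_smul_mul {K : Matrix m m R} (hK : IsUnit K) (A : Matrix m n R)
    (B : Matrix n m R) (s : R) (hC : IsUnit (A * B + s • K))
    (hS : IsUnit (B * K⁻¹ * A + s • 1)) :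
    B * (A * B + s • K)⁻¹ * A = B * K⁻¹ * A * (B * K⁻¹ * A + s • 1)⁻¹ := by
  rw [Matrix.mul_assoc, inv_mul_eq_mul_inv_of_mul_eq hC hS (mul_add_smul_mul_inv_mul hK A B s),
    ← Matrix.mul_assoc, ← Matrix.mul_assoc]

end CommRing

theorem PosDef.mul_transpose_add_smul {K : Matrix m m ℝ} (hK : K.PosDef) (A : Matrix m n ℝ)
    {s : ℝ} (hs : 0 < s) : (A * Aᵀ + s • K).PosDef :=
  (hK.smul hs).posSemidef_add (posSemidef_self_mul_conjTranspose A)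

theorem PosDef.transpose_mul_inv_mul_add_smul_one [DecidableEq m] [DecidableEq n]
    {K : Matrix m m ℝ} (hK : K.PosDef) (A : Matrix m n ℝ) {s : ℝ} (hs : 0 < s) :
    (Aᵀ * K⁻¹ * A + s • 1).PosDef :=
  (PosDef.one.smul hs).posSemidef_add (hK.inv.posSemidef.conjTranspose_mul_mul_same A)

end Matrix

/-- The sparse GP (VFE) posterior-mean identity:
`K_ZXᵀ C̃⁻¹ K_ZX = R (R + σ² I_N)⁻¹` with
`R = K_ZXᵀ K_ZZ⁻¹ K_ZX` and `C̃ = K_ZX K_ZXᵀ + σ² K_ZZ`. -/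
theorem vfe_nystrom_identity {M N : ℕ}
    (KZZ : Matrix (Fin M) (Fin M) ℝ) (hKZZ : KZZ.PosDef)
    (KZX : Matrix (Fin M) (Fin N) ℝ) (σ2 : ℝ) (hσ : 0 < σ2) :
    KZXᵀ * (KZX * KZXᵀ + σ2 • KZZ)⁻¹ * KZX =
      (KZXᵀ * KZZ⁻¹ * KZX) *
        (KZXᵀ * KZZ⁻¹ * KZX + σ2 • (1 : Matrix (Fin N) (Fin N) ℝ))⁻¹ :=
  mul_inv_add_smul_mul hKZZ.isUnit KZX KZXᵀ σ2 (hKZZ.mul_transpose_add_smul KZX hσ).isUnit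
    (hKZZ.transpose_mul_inv_mul_add_smul_one KZX hσ).isUnit
end

section
/- Let K_ZZ ∈ ℝ^{M×M} be symmetric positive definite, K_ZX ∈ ℝ^{M×N}, σ² > 0, and define B̃ = K_ZZ⁻¹ − σ²(K_ZX K_ZXᵀ + σ² K_ZZ)⁻¹. Then B̃ is symmetric positive semidefinite. -/
/-!
Put `K = K_ZZ`, `A = K_ZX K_ZXᵀ ⪰ 0`, `c = σ²` and `S = A + c K ≻ 0`. Expanding
`S K⁻¹ S = A K⁻¹ A + c A + c S` gives
`K⁻¹ - c S⁻¹ = S⁻¹ (S K⁻¹ S - c S) S⁻¹ = S⁻¹ (A K⁻¹ A + c A) S⁻¹`,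
a congruence of the positive semidefinite matrix `A K⁻¹ A + c A` by the Hermitian `S⁻¹`.
-/

open Matrix
open scoped ComplexOrder

namespace Matrix

variable {n : Type*} [Fintype n] [DecidableEq n]

theorem inv_sub_smul_inv_add_smul_eq {R : Type*} [CommRing R] {A K : Matrix n n R} {c : R}
    (hK : IsUnit K.det) (hS : IsUnit (A + c • K).det) :
    K⁻¹ - c • (A + c • K)⁻¹ = (A + c • K)⁻¹ * (A * K⁻¹ * A + c • A) * (A + c • K)⁻¹ := by
  set S := A + c • K with hSdef
  have hSKS : S * K⁻¹ * S = A * K⁻¹ * A + c • A + c • S := by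
    rw [hSdef]
    simp only [Matrix.add_mul, Matrix.mul_add, Matrix.smul_mul, Matrix.mul_smul, Matrix.mul_assoc,
      mul_nonsing_inv _ hK, nonsing_inv_mul _ hK, Matrix.mul_one, Matrix.one_mul, smul_add]
  have hcore : A * K⁻¹ * A + c • A = S * K⁻¹ * S - c • S := by
    rw [hSKS, add_sub_cancel_right]
  rw [hcore]
  simp only [Matrix.sub_mul, Matrix.mul_sub, Matrix.smul_mul, Matrix.mul_smul, Matrix.mul_assoc,
    mul_nonsing_inv _ hS, nonsing_inv_mul_cancel_left _ _ hS, Matrix.mul_one]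

variable {𝕜 : Type*} [RCLike 𝕜] {A K : Matrix n n 𝕜} {c : 𝕜}

theorem PosSemidef.mul_inv_mul_add_smul (hA : A.PosSemidef) (hK : K.PosDef) (hc : 0 ≤ c) :
    (A * K⁻¹ * A + c • A).PosSemidef := by
  have hAKA : (A * K⁻¹ * A).PosSemidef := by
    simpa only [hA.isHermitian.eq] using hK.posSemidef.inv.mul_mul_conjTranspose_same A
  exact hAKA.add (hA.smul hc)

theorem PosSemidef.inv_sub_smul_inv_add_smul (hA : A.PosSemidef) (hK : K.PosDef) (hc : 0 < c) :
    (K⁻¹ - c • (A + c • K)⁻¹).PosSemidef := by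
  have hS : (A + c • K).PosDef := (hK.smul hc).posSemidef_add hA
  rw [inv_sub_smul_inv_add_smul_eq hK.det_pos.ne'.isUnit hS.det_pos.ne'.isUnit]
  simpa only [hS.inv.isHermitian.eq] using
    (hA.mul_inv_mul_add_smul hK hc.le).mul_mul_conjTranspose_same (A + c • K)⁻¹

end Matrix

/-- The information-gain weight matrix
`B̃ = K_ZZ⁻¹ − σ²(K_ZX K_ZXᵀ + σ² K_ZZ)⁻¹` is symmetric positive semidefinite. -/
theorem information_gain_psd {M N : ℕ}
    (KZZ : Matrix (Fin M) (Fin M) ℝ) (hKZZ : KZZ.PosDef)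
    (KZX : Matrix (Fin M) (Fin N) ℝ) (σ2 : ℝ) (hσ : 0 < σ2) :
    (KZZ⁻¹ - σ2 • (KZX * KZXᵀ + σ2 • KZZ)⁻¹).PosSemidef := by
  have hA : (KZX * KZXᵀ).PosSemidef := by
    simpa only [conjTranspose_eq_transpose_of_trivial] using posSemidef_self_mul_conjTranspose KZX
  exact hA.inv_sub_smul_inv_add_smul hKZZ hσ
end
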